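/- arXiv:2601.11300 — 6 statements merged into one kernel-verified Lean document; each statement's English description precedes it below -/
import Mathlib

section
/- Let ψ : ℝⁿ ⇉ ℝⁿ satisfy the (Γ₁)-condition and let V : ℝⁿ → ℝⁿ be L-Lipschitz continuous and η-strongly monotone. Assume there exists ρ > 0 such that ‖P_{ψ(r)}(y) − P_{ψ(s)}(y)‖ ≤ ρ‖r − s‖ for all y, r, s ∈ ℝⁿ, and that there exists a constant μ > 0 with √(L² − 2ημ + μ²) + ρ < μ. Then the inverse quasi-variational inequality problem has a unique solution. -/
open scoped RealInnerProductSpace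
open MeasureTheory

/- Metric projection onto a set `C ⊆ ℝⁿ`: when `C` is nonempty, closed and convex this is
the unique nearest point of `C`. -/
open Classical in
noncomputable def metricProj {d : ℕ} (C : Set (EuclideanSpace ℝ (Fin d)))
    (x : EuclideanSpace ℝ (Fin d)) : EuclideanSpace ℝ (Fin d) :=
  if h : ∃ y, y ∈ C ∧ ∀ z ∈ C, ‖x - y‖ ≤ ‖x - z‖ then h.choose else x

section Aux

variable {d : ℕ}

/-- Membership and variational characterization of the metric projection. -/
lemma metricProj_spec {C : Set (EuclideanSpace ℝ (Fin d))} (hne : C.Nonempty)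
    (hcl : IsClosed C) (hconv : Convex ℝ C) (x : EuclideanSpace ℝ (Fin d)) :
    metricProj C x ∈ C ∧ ∀ z ∈ C, (⟪x - metricProj C x, z - metricProj C x⟫ : ℝ) ≤ 0 := by
  classical
  haveI : Nonempty C := hne.to_subtype
  have hbdd : BddBelow (Set.range fun w : C => ‖x - (w : EuclideanSpace ℝ (Fin d))‖) :=
    ⟨0, Set.forall_mem_range.2 fun _ => norm_nonneg _⟩
  have hex : ∃ y, y ∈ C ∧ ∀ z ∈ C, ‖x - y‖ ≤ ‖x - z‖ := by
    obtain ⟨v, hvC, hv⟩ :=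
      exists_norm_eq_iInf_of_complete_convex hne hcl.isComplete hconv x
    refine ⟨v, hvC, fun z hz => ?_⟩
    rw [hv]
    exact ciInf_le hbdd ⟨z, hz⟩
  have hchoose := hex.choose_spec
  have hmp : metricProj C x = hex.choose := by
    simp only [metricProj, dif_pos hex]
  rw [hmp]
  refine ⟨hchoose.1, ?_⟩
  have heq : ‖x - hex.choose‖ = ⨅ w : C, ‖x - (w : EuclideanSpace ℝ (Fin d))‖ :=
    le_antisymm (le_ciInf fun w => hchoose.2 w w.2) (ciInf_le hbdd ⟨_, hchoose.1⟩)
  exact (norm_eq_iInf_iff_real_inner_le_zero hconv hchoose.1).1 heq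

/-- Uniqueness: any point satisfying the variational characterization is the projection. -/
lemma eq_metricProj {C : Set (EuclideanSpace ℝ (Fin d))} (hne : C.Nonempty)
    (hcl : IsClosed C) (hconv : Convex ℝ C) {x u : EuclideanSpace ℝ (Fin d)}
    (huC : u ∈ C) (hu : ∀ z ∈ C, (⟪x - u, z - u⟫ : ℝ) ≤ 0) : u = metricProj C x := by
  obtain ⟨hpC, hp⟩ := metricProj_spec hne hcl hconv x
  set p := metricProj C x
  have h1 : (⟪x - u, p - u⟫ : ℝ) ≤ 0 := hu p hpC
  have h2 : (⟪x - p, u - p⟫ : ℝ) ≤ 0 := hp u huC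
  have key : ‖u - p‖ ^ 2 ≤ 0 := by
    have h3 : (⟪(x - u) - (x - p), p - u⟫ : ℝ) ≤ 0 := by
      have h2' : (0 : ℝ) ≤ ⟪x - p, p - u⟫ := by
        have he : u - p = -(p - u) := by abel
        rw [he, inner_neg_right] at h2; linarith
      rw [inner_sub_left]; linarith
    have hxupu : (x - u) - (x - p) = p - u := by abel
    rw [hxupu, real_inner_self_eq_norm_sq] at h3
    calc ‖u - p‖ ^ 2 = ‖p - u‖ ^ 2 := by rw [norm_sub_rev]
    _ ≤ 0 := h3
  have hz : ‖u - p‖ = 0 := by nlinarith [norm_nonneg (u - p)]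
  exact norm_sub_eq_zero_iff.1 hz

/-- `I - P_C` is nonexpansive. -/
lemma metricProj_residual_nonexpansive {C : Set (EuclideanSpace ℝ (Fin d))} (hne : C.Nonempty)
    (hcl : IsClosed C) (hconv : Convex ℝ C) (a b : EuclideanSpace ℝ (Fin d)) :
    ‖(a - metricProj C a) - (b - metricProj C b)‖ ≤ ‖a - b‖ := by
  obtain ⟨huC, hu⟩ := metricProj_spec hne hcl hconv a
  obtain ⟨hvC, hv⟩ := metricProj_spec hne hcl hconv b
  set u := metricProj C a
  set v := metricProj C b
  have h1 : (⟪a - u, v - u⟫ : ℝ) ≤ 0 := hu v hvC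
  have h2 : (⟪b - v, u - v⟫ : ℝ) ≤ 0 := hv u huC
  have hfe : (0 : ℝ) ≤ ⟪(a - u) - (b - v), u - v⟫ := by
    have h1' : (0 : ℝ) ≤ ⟪a - u, u - v⟫ := by
      have he : v - u = -(u - v) := by abel
      rw [he, inner_neg_right] at h1; linarith
    rw [inner_sub_left]; linarith
  set c := a - b with hc
  set e := u - v with he
  set f := (a - u) - (b - v) with hf
  have hcef : c = f + e := by rw [hc, hf, he]; abel
  have hexp : ‖c‖ ^ 2 = ‖f‖ ^ 2 + 2 * (⟪f, e⟫ : ℝ) + ‖e‖ ^ 2 := by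
    rw [hcef, ← real_inner_self_eq_norm_sq, ← real_inner_self_eq_norm_sq,
      ← real_inner_self_eq_norm_sq, inner_add_add_self, real_inner_comm e f]
    ring
  have hsq : ‖f‖ ^ 2 ≤ ‖c‖ ^ 2 := by nlinarith [sq_nonneg ‖e‖]
  nlinarith [norm_nonneg f, norm_nonneg c]

end Aux

/-- Under the (Γ₁)-condition on `ψ`, Lipschitz continuity and strong
monotonicity of `V`, the projection-Lipschitz condition with constant `ρ`, and
`√(L² − 2ημ + μ²) + ρ < μ` for some `μ > 0`, the IQVIP has a unique solution. -/
theorem stmt_1 {d : ℕ} (ψ : EuclideanSpace ℝ (Fin d) → Set (EuclideanSpace ℝ (Fin d)))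
    (V : EuclideanSpace ℝ (Fin d) → EuclideanSpace ℝ (Fin d)) (L η ρ μ : ℝ)
    (hΓ₁ : ∀ x, (ψ x).Nonempty ∧ IsClosed (ψ x) ∧ Convex ℝ (ψ x))
    (hL : ∀ y z, ‖V y - V z‖ ≤ L * ‖y - z‖)
    (hη : ∀ y z, η * ‖y - z‖ ^ 2 ≤ ⟪V y - V z, y - z⟫)
    (hρ : 0 < ρ)
    (hproj : ∀ y r s, ‖metricProj (ψ r) y - metricProj (ψ s) y‖ ≤ ρ * ‖r - s‖)
    (hμ : 0 < μ)
    (hcond : Real.sqrt (L ^ 2 - 2 * η * μ + μ ^ 2) + ρ < μ) :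
    ∃! xs : EuclideanSpace ℝ (Fin d),
      V xs ∈ ψ xs ∧ ∀ z ∈ ψ xs, 0 ≤ ⟪xs, z - V xs⟫ := by
  classical
  set θ := Real.sqrt (L ^ 2 - 2 * η * μ + μ ^ 2) with hθ
  have hθ0 : 0 ≤ θ := Real.sqrt_nonneg _
  set w : EuclideanSpace ℝ (Fin d) → EuclideanSpace ℝ (Fin d) :=
    fun x => V x - μ • x with hw
  set F : EuclideanSpace ℝ (Fin d) → EuclideanSpace ℝ (Fin d) :=
    fun x => μ⁻¹ • (metricProj (ψ x) (w x) - w x) with hF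
  -- estimate ‖w x - w y‖ ≤ θ ‖x - y‖
  have hwlip : ∀ x y, ‖w x - w y‖ ≤ θ * ‖x - y‖ := by
    intro x y
    have hsq : ‖w x - w y‖ ^ 2 ≤ (L ^ 2 - 2 * η * μ + μ ^ 2) * ‖x - y‖ ^ 2 := by
      have hexp : w x - w y = (V x - V y) - μ • (x - y) := by
        simp only [hw, smul_sub]; abel
      rw [hexp, norm_sub_sq_real, real_inner_smul_right, norm_smul]
      have hmun : ‖μ‖ = μ := Real.norm_of_nonneg hμ.le
      rw [hmun]
      have hV := hL x y
      have hm := hη x y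
      nlinarith [norm_nonneg (V x - V y), norm_nonneg (x - y),
        mul_self_le_mul_self (norm_nonneg (V x - V y)) hV,
        mul_le_mul_of_nonneg_left hm hμ.le]
    calc ‖w x - w y‖ = Real.sqrt (‖w x - w y‖ ^ 2) := (Real.sqrt_sq (norm_nonneg _)).symm
      _ ≤ Real.sqrt ((L ^ 2 - 2 * η * μ + μ ^ 2) * ‖x - y‖ ^ 2) := Real.sqrt_le_sqrt hsq
      _ = θ * ‖x - y‖ := by
          rw [Real.sqrt_mul' _ (sq_nonneg ‖x - y‖), Real.sqrt_sq (norm_nonneg _), hθ]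
  -- F is Lipschitz with constant (θ + ρ)/μ
  have hFlip : ∀ x y, ‖F x - F y‖ ≤ (θ + ρ) / μ * ‖x - y‖ := by
    intro x y
    obtain ⟨hney, hcly, hcvy⟩ := hΓ₁ y
    have hFx : F x - F y = μ⁻¹ • ((metricProj (ψ x) (w x) - metricProj (ψ y) (w x)) -
        ((w x - metricProj (ψ y) (w x)) - (w y - metricProj (ψ y) (w y)))) := by
      simp only [hF, ← smul_sub]
      congr 1
      abel
    have h1 : ‖metricProj (ψ x) (w x) - metricProj (ψ y) (w x)‖ ≤ ρ * ‖x - y‖ :=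
      hproj (w x) x y
    have h2 : ‖(w x - metricProj (ψ y) (w x)) - (w y - metricProj (ψ y) (w y))‖ ≤ ‖w x - w y‖ :=
      metricProj_residual_nonexpansive hney hcly hcvy (w x) (w y)
    rw [hFx, norm_smul]
    have hn : ‖(metricProj (ψ x) (w x) - metricProj (ψ y) (w x)) -
        ((w x - metricProj (ψ y) (w x)) - (w y - metricProj (ψ y) (w y)))‖
        ≤ ρ * ‖x - y‖ + θ * ‖x - y‖ :=
      (norm_sub_le _ _).trans (add_le_add h1 (h2.trans (hwlip x y)))
    have hmun : ‖μ⁻¹‖ = μ⁻¹ := Real.norm_of_nonneg (inv_nonneg.2 hμ.le)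
    rw [hmun]
    calc μ⁻¹ * ‖_‖ ≤ μ⁻¹ * (ρ * ‖x - y‖ + θ * ‖x - y‖) :=
        mul_le_mul_of_nonneg_left hn (inv_nonneg.2 hμ.le)
      _ = (θ + ρ) / μ * ‖x - y‖ := by field_simp; ring
  -- contraction
  set K : NNReal := ⟨(θ + ρ) / μ, div_nonneg (by linarith) hμ.le⟩ with hK
  have hK1 : K < 1 := by
    rw [← NNReal.coe_lt_coe]
    exact (div_lt_one hμ).2 (by rw [hθ] at *; linarith)
  have hlip : LipschitzWith K F := by
    apply LipschitzWith.of_dist_le_mul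
    intro x y
    rw [dist_eq_norm, dist_eq_norm]
    exact hFlip x y
  have hcontr : ContractingWith K F := ⟨hK1, hlip⟩
  -- equivalence between IQVIP and fixed points of F
  have hiff : ∀ x : EuclideanSpace ℝ (Fin d),
      (V x ∈ ψ x ∧ ∀ z ∈ ψ x, 0 ≤ (⟪x, z - V x⟫ : ℝ)) ↔ Function.IsFixedPt F x := by
    intro x
    obtain ⟨hne, hcl, hcv⟩ := hΓ₁ x
    have hfix : Function.IsFixedPt F x ↔ metricProj (ψ x) (w x) = V x := by
      unfold Function.IsFixedPt
      simp only [hF]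
      constructor
      · intro h
        have h1 : metricProj (ψ x) (w x) - w x = μ • x := by
          have h2 := congrArg (fun v : EuclideanSpace ℝ (Fin d) => μ • v) h
          simpa [smul_smul, mul_inv_cancel₀ hμ.ne'] using h2
        have h3 : metricProj (ψ x) (w x) = w x + μ • x := by rw [← h1]; abel
        rw [h3, hw]; module
      · intro h
        rw [h]
        have h4 : V x - w x = μ • x := by rw [hw]; module
        rw [h4, smul_smul, inv_mul_cancel₀ hμ.ne', one_smul]
    rw [hfix]
    constructor
    · rintro ⟨hmem, hvar⟩
      refine (eq_metricProj hne hcl hcv hmem ?_).symm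
      intro z hz
      have h5 : w x - V x = -(μ • x) := by rw [hw]; module
      rw [h5, inner_neg_left, real_inner_smul_left]
      have := hvar z hz
      nlinarith
    · intro h
      obtain ⟨hmem, hvar⟩ := metricProj_spec hne hcl hcv (w x)
      rw [h] at hmem hvar
      refine ⟨hmem, fun z hz => ?_⟩
      have h6 := hvar z hz
      have h5 : w x - V x = -(μ • x) := by rw [hw]; module
      rw [h5, inner_neg_left, real_inner_smul_left] at h6
      nlinarith
  exact ⟨hcontr.fixedPoint F, (hiff _).2 hcontr.fixedPoint_isFixedPt,
    fun y hy => hcontr.fixedPoint_unique ((hiff y).1 hy)⟩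
end

section
/- Let Ψ be a nonempty closed convex subset of ℝⁿ and let g : ℝⁿ → ℝⁿ be Lipschitz continuous with constant l. Define the set-valued mapping ψ(x) := g(x) + Ψ (the translate of Ψ by g(x)). Then ψ satisfies ‖P_{ψ(r)}(y) − P_{ψ(s)}(y)‖ ≤ l‖r − s‖ for all y, r, s ∈ ℝⁿ. -/
/-
The projections `u` of `y` onto `a + Ψ` and `v` of `y` onto `b + Ψ` are compared through their
variational inequalities: `v + (a - b)` lies in `a + Ψ` and `u - (a - b)` lies in `b + Ψ`, and adding
the two inequalities tested at these points gives `‖u - v‖² ≤ ⟪u - v, a - b⟫`, whence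
`‖u - v‖ ≤ ‖a - b‖ ≤ l ‖r - s‖` by Cauchy–Schwarz and the Lipschitz bound on `g`.
-/

open scoped RealInnerProductSpace
open MeasureTheory

open scoped Pointwise

theorem Set.sub_add_mem_vadd_set {G : Type*} [AddCommGroup G] {C : Set G} {a b u : G}
    (hu : u ∈ a +ᵥ C) : u - a + b ∈ b +ᵥ C := by
  rw [Set.mem_vadd_set_iff_neg_vadd_mem] at hu ⊢
  convert hu using 1
  simp only [vadd_eq_add]
  abel

section VariationalInequality

variable {F : Type*} [NormedAddCommGroup F] [InnerProductSpace ℝ F]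

theorem sq_norm_sub_le_inner_of_inner_le_zero_vadd_set {C : Set F} {a b y u v : F}
    (hu : u ∈ a +ᵥ C) (hv : v ∈ b +ᵥ C)
    (hu_var : ∀ z ∈ a +ᵥ C, ⟪y - u, z - u⟫ ≤ 0) (hv_var : ∀ z ∈ b +ᵥ C, ⟪y - v, z - v⟫ ≤ 0) :
    ‖u - v‖ ^ 2 ≤ ⟪u - v, a - b⟫ := by
  have hu_test := hu_var _ (Set.sub_add_mem_vadd_set (b := a) hv)
  have hv_test := hv_var _ (Set.sub_add_mem_vadd_set (b := b) hu)
  have hsum : ⟪u - v, u - v - (a - b)⟫ ≤ 0 := by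
    have hu_eq : v - b + a - u = -(u - v - (a - b)) := by abel
    have hv_eq : u - a + b - v = u - v - (a - b) := by abel
    have hdiff : ⟪u - v, u - v - (a - b)⟫ =
        ⟪y - v, u - v - (a - b)⟫ - ⟪y - u, u - v - (a - b)⟫ := by
      rw [← inner_sub_left, sub_sub_sub_cancel_left]
    rw [hu_eq, inner_neg_right] at hu_test
    rw [hv_eq] at hv_test
    linarith
  rw [inner_sub_right, real_inner_self_eq_norm_sq] at hsum
  linarith

theorem norm_sub_le_of_inner_le_zero_vadd_set {C : Set F} {a b y u v : F}
    (hu : u ∈ a +ᵥ C) (hv : v ∈ b +ᵥ C)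
    (hu_var : ∀ z ∈ a +ᵥ C, ⟪y - u, z - u⟫ ≤ 0) (hv_var : ∀ z ∈ b +ᵥ C, ⟪y - v, z - v⟫ ≤ 0) :
    ‖u - v‖ ≤ ‖a - b‖ := by
  have h := (sq_norm_sub_le_inner_of_inner_le_zero_vadd_set hu hv hu_var hv_var).trans
    (real_inner_le_norm (u - v) (a - b))
  nlinarith [norm_nonneg (u - v), norm_nonneg (a - b)]

end VariationalInequality

section MetricProj

variable {d : ℕ} {C : Set (EuclideanSpace ℝ (Fin d))}

theorem exists_isNearest_of_convex (hne : C.Nonempty) (hcl : IsClosed C) (hconv : Convex ℝ C)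
    (x : EuclideanSpace ℝ (Fin d)) : ∃ y, y ∈ C ∧ ∀ z ∈ C, ‖x - y‖ ≤ ‖x - z‖ := by
  obtain ⟨v, hv, heq⟩ := exists_norm_eq_iInf_of_complete_convex hne hcl.isComplete hconv x
  refine ⟨v, hv, fun z hz => ?_⟩
  rw [heq]
  exact ciInf_le ⟨0, Set.forall_mem_range.2 fun _ => norm_nonneg _⟩ (⟨z, hz⟩ : C)

theorem metricProj_mem_and_inner_le_zero (hne : C.Nonempty) (hcl : IsClosed C)
    (hconv : Convex ℝ C) (x : EuclideanSpace ℝ (Fin d)) :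
    metricProj C x ∈ C ∧ ∀ z ∈ C, ⟪x - metricProj C x, z - metricProj C x⟫ ≤ 0 := by
  have hex := exists_isNearest_of_convex hne hcl hconv x
  obtain ⟨hmem, hmin⟩ : metricProj C x ∈ C ∧ ∀ z ∈ C, ‖x - metricProj C x‖ ≤ ‖x - z‖ := by
    rw [metricProj, dif_pos hex]
    exact hex.choose_spec
  have : Nonempty C := hne.to_subtype
  have hinf : ‖x - metricProj C x‖ = ⨅ w : C, ‖x - w‖ :=
    le_antisymm (le_ciInf fun w => hmin w w.2)
      (ciInf_le ⟨0, Set.forall_mem_range.2 fun _ => norm_nonneg _⟩ (⟨_, hmem⟩ : C))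
  exact ⟨hmem, (norm_eq_iInf_iff_real_inner_le_zero hconv hmem).mp hinf⟩

theorem norm_metricProj_vadd_set_sub_le (hne : C.Nonempty) (hcl : IsClosed C)
    (hconv : Convex ℝ C) (a b y : EuclideanSpace ℝ (Fin d)) :
    ‖metricProj (a +ᵥ C) y - metricProj (b +ᵥ C) y‖ ≤ ‖a - b‖ := by
  obtain ⟨hu, hu_var⟩ :=
    metricProj_mem_and_inner_le_zero hne.vadd_set (hcl.vadd a) (hconv.vadd a) y
  obtain ⟨hv, hv_var⟩ :=
    metricProj_mem_and_inner_le_zero hne.vadd_set (hcl.vadd b) (hconv.vadd b) y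
  exact norm_sub_le_of_inner_le_zero_vadd_set hu hv hu_var hv_var

end MetricProj

/-- If `ψ x = g x + Ψ` (moving set) with `Ψ` nonempty closed convex and `g`
`l`-Lipschitz, then `‖P_{ψ r}(y) − P_{ψ s}(y)‖ ≤ l ‖r − s‖` for all `y, r, s`. -/
theorem stmt_2 {d : ℕ} (Ψ : Set (EuclideanSpace ℝ (Fin d))) (hne : Ψ.Nonempty)
    (hcl : IsClosed Ψ) (hconv : Convex ℝ Ψ)
    (g : EuclideanSpace ℝ (Fin d) → EuclideanSpace ℝ (Fin d)) (l : ℝ)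
    (hg : ∀ y z, ‖g y - g z‖ ≤ l * ‖y - z‖)
    (ψ : EuclideanSpace ℝ (Fin d) → Set (EuclideanSpace ℝ (Fin d)))
    (hψ : ∀ x, ψ x = g x +ᵥ Ψ) :
    ∀ y r s, ‖metricProj (ψ r) y - metricProj (ψ s) y‖ ≤ l * ‖r - s‖ := by
  intro y r s
  rw [hψ r, hψ s]
  exact (norm_metricProj_vadd_set_sub_le hne hcl hconv (g r) (g s) y).trans (hg r s)
end

section
/- Let σ, τ : [0, ∞) → [0, ∞) be Lebesgue measurable functions that are locally integrable (integrable on [0, s] for every 0 < s < ∞). Let ψ : ℝⁿ ⇉ ℝⁿ satisfy the (Γ₁)-condition, let V : ℝⁿ → ℝⁿ be L-Lipschitz continuous and η-strongly monotone, let μ > 0, and assume there exists ρ > 0 such that ‖P_{ψ(r)}(y) − P_{ψ(s)}(y)‖ ≤ ρ‖r − s‖ for all y, r, s ∈ ℝⁿ. Then for any a₀, b₀ ∈ ℝⁿ, the second-order dynamical system ẍ(t) + σ(t)ẋ(t) + τ(t)(V(x(t)) − P_{ψ(x(t))}(V(x(t)) − μ x(t))) = 0, x(0) = a₀, ẋ(0)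 = b₀, has a unique strong global solution; that is, there is a unique x : [0, ∞) → ℝⁿ such that x and ẋ are absolutely continuous on every compact interval [0, q], the differential equation holds for almost every t ∈ [0, ∞), and x(0) = a₀, ẋ(0) = b₀. -/
/-
Writing `y = (x, ẋ)` turns the equation into a first-order system `y' = Φ(t, y)` whose
right-hand side is Lipschitz in `y` with the locally integrable modulus `1 + |σ| + K |τ|`, where
`K` is a Lipschitz constant of `x ↦ V x - P_{ψ x}(V x - μ x)`; such a `K` exists because metric
projections onto closed convex sets are nonexpansive and `x ↦ P_{ψ x}` is `ρ`-Lipschitz. For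
such a Carathéodory system the Picard operator is a `1/2`-contraction on `C([a, b])` as soon as
`∫ₐᵇ k ≤ 1/2`. Cutting `[0, q]` into finitely many pieces of this kind gives a unique continuous
solution of the integral equation on every `[0, q]`, and these solutions patch together.
-/

open scoped RealInnerProductSpace
open MeasureTheory

/-- A strong global solution of the second-order dynamical system
`ẍ(t) + σ(t) ẋ(t) + τ(t) (V(x(t)) − P_{ψ(x(t))}(V(x(t)) − μ x(t))) = 0`,
`x(0) = a₀`, `ẋ(0) = b₀`, encoded via a derivative `v = ẋ` and a second derivative `w = ẍ`:
`x` and `v` are absolutely continuous on every compact interval `[0, q]` (they are integrals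
of locally integrable functions), the equation holds for almost every `t ≥ 0`, and the
initial conditions hold. -/
def IsStrongGlobalSolution {d : ℕ} (σ τ : ℝ → ℝ)
    (ψ : EuclideanSpace ℝ (Fin d) → Set (EuclideanSpace ℝ (Fin d)))
    (V : EuclideanSpace ℝ (Fin d) → EuclideanSpace ℝ (Fin d)) (μ : ℝ)
    (a₀ b₀ : EuclideanSpace ℝ (Fin d)) (x v : ℝ → EuclideanSpace ℝ (Fin d)) : Prop :=
  x 0 = a₀ ∧ v 0 = b₀ ∧
    (∀ q : ℝ, 0 < q → IntegrableOn v (Set.Icc 0 q)) ∧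
    (∀ t : ℝ, 0 ≤ t → x t = a₀ + ∫ s in (0:ℝ)..t, v s) ∧
    ∃ w : ℝ → EuclideanSpace ℝ (Fin d),
      (∀ q : ℝ, 0 < q → IntegrableOn w (Set.Icc 0 q)) ∧
      (∀ t : ℝ, 0 ≤ t → v t = b₀ + ∫ s in (0:ℝ)..t, w s) ∧
      ∀ᵐ t ∂(volume.restrict (Set.Ici (0:ℝ))),
        w t + σ t • v t + τ t • (V (x t) - metricProj (ψ (x t)) (V (x t) - μ • x t)) = 0

open Set

theorem integrableOn_Icc_of_forall_integrableOn_Icc_zero {E : Type*} [NormedAddCommGroup E]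
    {f : ℝ → E} (hf : ∀ b, 0 < b → IntegrableOn f (Icc 0 b)) {a b : ℝ} (ha : 0 ≤ a) :
    IntegrableOn f (Icc a b) :=
  (hf (max b 1) (by positivity)).mono_set (Icc_subset_Icc ha (le_max_left b 1))

theorem Icc_induction_of_integral_le {k : ℝ → ℝ} {a b ε : ℝ} (hab : a ≤ b) (hε : 0 < ε)
    (hk : IntegrableOn k (Icc a b)) (P : ℝ → ℝ → Prop)
    (small : ∀ x ∈ Icc a b, ∀ y ∈ Icc x b, ∫ s in x..y, k s ≤ ε → P x y)
    (concat : ∀ x ∈ Icc a b, ∀ y ∈ Icc x b, P x y → P y b → P x b) : P a b := by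
  have hki : ∀ x ∈ Icc a b, ∀ y ∈ Icc a b, IntervalIntegrable k volume x y := fun x hx y hy =>
    (hk.mono_set (uIcc_subset_Icc hx hy)).intervalIntegrable
  suffices ∀ n : ℕ, ∀ x ∈ Icc a b, ∫ s in x..b, k s ≤ n * ε → P x b by
    refine this ⌈(∫ s in a..b, k s) / ε⌉₊ a (left_mem_Icc.2 hab) ?_
    rw [← div_le_iff₀ hε]
    exact Nat.le_ceil _
  intro n
  induction n with
  | zero =>
    intro x hx h
    exact small x hx b ⟨hx.2, le_rfl⟩ (h.trans (by simp [hε.le]))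
  | succ n ih =>
    intro x hx h
    by_cases hsmall : ∫ s in x..b, k s ≤ ε
    · exact small x hx b ⟨hx.2, le_rfl⟩ hsmall
    -- cut off a first piece `[x, c]` on which `k` has integral exactly `ε`
    have hcont : ContinuousOn (fun t => ∫ s in x..t, k s) (Icc x b) := by
      rw [← uIcc_of_le hx.2]
      exact intervalIntegral.continuousOn_primitive_interval
        (hk.mono_set (uIcc_subset_Icc hx (right_mem_Icc.2 hab)))
    obtain ⟨c, hc, hcε⟩ := intermediate_value_Icc hx.2 hcont
      ⟨by simpa using hε.le, (not_le.1 hsmall).le⟩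
    have hcI : c ∈ Icc a b := ⟨hx.1.trans hc.1, hc.2⟩
    have hrest : ∫ s in c..b, k s ≤ n * ε := by
      rw [← intervalIntegral.integral_interval_sub_left (hki x hx b (right_mem_Icc.2 hab))
        (hki x hx c hcI)]
      push_cast at h
      simp only at hcε
      linarith
    exact concat x hx c hc (small x hx c hc hcε.le) (ih c hcI hrest)

section Integrals

variable {E E' : Type*} [NormedAddCommGroup E] [NormedSpace ℝ E] [NormedAddCommGroup E']
  [NormedSpace ℝ E'] {a b : ℝ}

theorem intervalIntegral.fst_integral [CompleteSpace E'] {f : ℝ → E × E'}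
    (hf : IntervalIntegrable f volume a b) : (∫ s in a..b, f s).1 = ∫ s in a..b, (f s).1 := by
  simp only [intervalIntegral, Prod.fst_sub, _root_.fst_integral hf.1, _root_.fst_integral hf.2]

theorem intervalIntegral.snd_integral [CompleteSpace E] {f : ℝ → E × E'}
    (hf : IntervalIntegrable f volume a b) : (∫ s in a..b, f s).2 = ∫ s in a..b, (f s).2 := by
  simp only [intervalIntegral, Prod.snd_sub, _root_.snd_integral hf.1, _root_.snd_integral hf.2]

theorem continuousOn_Icc_of_eq_add_integral {f g : ℝ → E} {c : E} (hab : a ≤ b)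
    (hf : IntegrableOn f (Icc a b)) (hg : ∀ t ∈ Icc a b, g t = c + ∫ s in a..t, f s) :
    ContinuousOn g (Icc a b) := by
  rw [← uIcc_of_le hab] at hf ⊢
  refine (continuousOn_const.add (intervalIntegral.continuousOn_primitive_interval hf)).congr
    fun t ht => hg t ?_
  rwa [← uIcc_of_le hab]

end Integrals

section MetricProjection

variable {d : ℕ} {C : Set (EuclideanSpace ℝ (Fin d))}

theorem metricProj_mem_and_norm_sub_le (hne : C.Nonempty) (hcl : IsClosed C) (hco : Convex ℝ C)
    (x : EuclideanSpace ℝ (Fin d)) :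
    metricProj C x ∈ C ∧ ∀ z ∈ C, ‖x - metricProj C x‖ ≤ ‖x - z‖ := by
  have hex : ∃ y, y ∈ C ∧ ∀ z ∈ C, ‖x - y‖ ≤ ‖x - z‖ := by
    obtain ⟨y, hyC, hy⟩ := exists_norm_eq_iInf_of_complete_convex hne hcl.isComplete hco x
    exact ⟨y, hyC, fun z hz =>
      hy ▸ ciInf_le ⟨0, forall_mem_range.2 fun _ => norm_nonneg _⟩ (⟨z, hz⟩ : C)⟩
  rw [metricProj, dif_pos hex]
  exact hex.choose_spec

theorem inner_sub_metricProj_le_zero (hne : C.Nonempty) (hcl : IsClosed C) (hco : Convex ℝ C)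
    (x : EuclideanSpace ℝ (Fin d)) {z : EuclideanSpace ℝ (Fin d)} (hz : z ∈ C) :
    ⟪x - metricProj C x, z - metricProj C x⟫ ≤ 0 := by
  obtain ⟨hmem, hmin⟩ := metricProj_mem_and_norm_sub_le hne hcl hco x
  have : Nonempty C := hne.to_subtype
  refine (norm_eq_iInf_iff_real_inner_le_zero hco hmem).1
    (le_antisymm (le_ciInf fun w : C => hmin w w.2) ?_) z hz
  exact ciInf_le ⟨0, forall_mem_range.2 fun _ => norm_nonneg _⟩ (⟨_, hmem⟩ : C)

theorem norm_metricProj_sub_metricProj_le (hne : C.Nonempty) (hcl : IsClosed C)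
    (hco : Convex ℝ C) (x y : EuclideanSpace ℝ (Fin d)) :
    ‖metricProj C x - metricProj C y‖ ≤ ‖x - y‖ := by
  have hx := inner_sub_metricProj_le_zero hne hcl hco x
    (metricProj_mem_and_norm_sub_le hne hcl hco y).1
  have hy := inner_sub_metricProj_le_zero hne hcl hco y
    (metricProj_mem_and_norm_sub_le hne hcl hco x).1
  set p := metricProj C x
  set q := metricProj C y
  have hsq : ‖p - q‖ ^ 2 ≤ ⟪x - y, p - q⟫ := by
    have : ⟪x - y, p - q⟫ - ‖p - q‖ ^ 2 = -⟪x - p, q - p⟫ - ⟪y - q, p - q⟫ := by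
      rw [← real_inner_self_eq_norm_sq]
      simp only [inner_sub_left, inner_sub_right, real_inner_comm]
      ring
    linarith
  nlinarith [hsq.trans (real_inner_le_norm _ _), norm_nonneg (p - q), norm_nonneg (x - y)]

variable {ψ : EuclideanSpace ℝ (Fin d) → Set (EuclideanSpace ℝ (Fin d))} {ρ : ℝ}

theorem norm_metricProj_sub_metricProj_le_add
    (hΓ₁ : ∀ x, (ψ x).Nonempty ∧ IsClosed (ψ x) ∧ Convex ℝ (ψ x))
    (hproj : ∀ y r s, ‖metricProj (ψ r) y - metricProj (ψ s) y‖ ≤ ρ * ‖r - s‖)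
    (r s y z : EuclideanSpace ℝ (Fin d)) :
    ‖metricProj (ψ r) y - metricProj (ψ s) z‖ ≤ ρ * ‖r - s‖ + ‖y - z‖ :=
  (norm_sub_le_norm_sub_add_norm_sub _ (metricProj (ψ s) y) _).trans <| add_le_add (hproj y r s)
    (norm_metricProj_sub_metricProj_le (hΓ₁ s).1 (hΓ₁ s).2.1 (hΓ₁ s).2.2 y z)

noncomputable def qviResidual (ψ : EuclideanSpace ℝ (Fin d) → Set (EuclideanSpace ℝ (Fin d)))
    (V : EuclideanSpace ℝ (Fin d) → EuclideanSpace ℝ (Fin d)) (μ : ℝ)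
    (x : EuclideanSpace ℝ (Fin d)) : EuclideanSpace ℝ (Fin d) :=
  V x - metricProj (ψ x) (V x - μ • x)

theorem lipschitzWith_qviResidual (hΓ₁ : ∀ x, (ψ x).Nonempty ∧ IsClosed (ψ x) ∧ Convex ℝ (ψ x))
    (hproj : ∀ y r s, ‖metricProj (ψ r) y - metricProj (ψ s) y‖ ≤ ρ * ‖r - s‖)
    {V : EuclideanSpace ℝ (Fin d) → EuclideanSpace ℝ (Fin d)} {L : ℝ}
    (hL : ∀ y z, ‖V y - V z‖ ≤ L * ‖y - z‖) (μ : ℝ) :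
    LipschitzWith (2 * L + ρ + |μ|).toNNReal (qviResidual ψ V μ) := by
  refine LipschitzWith.of_dist_le' fun x y => ?_
  simp only [dist_eq_norm, qviResidual]
  have hμ : ‖(V x - μ • x) - (V y - μ • y)‖ ≤ L * ‖x - y‖ + |μ| * ‖x - y‖ := by
    rw [sub_sub_sub_comm, ← smul_sub, ← Real.norm_eq_abs, ← norm_smul]
    exact (norm_sub_le _ _).trans (add_le_add (hL x y) le_rfl)
  calc ‖(V x - metricProj (ψ x) (V x - μ • x)) - (V y - metricProj (ψ y) (V y - μ • y))‖
      ≤ ‖V x - V y‖ + ‖metricProj (ψ x) (V x - μ • x) - metricProj (ψ y) (V y - μ • y)‖ := by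
        rw [sub_sub_sub_comm]
        exact norm_sub_le _ _
    _ ≤ L * ‖x - y‖ + (ρ * ‖x - y‖ + (L * ‖x - y‖ + |μ| * ‖x - y‖)) :=
        add_le_add (hL x y) ((norm_metricProj_sub_metricProj_le_add hΓ₁ hproj _ _ _ _).trans
          (add_le_add le_rfl hμ))
    _ = (2 * L + ρ + |μ|) * ‖x - y‖ := by ring

end MetricProjection

section Caratheodory

variable {W : Type*} [NormedAddCommGroup W]

structure IsLipschitzCaratheodory (Φ : ℝ → W → W) (k : ℝ → ℝ) : Prop where
  integrableOn_modulus : ∀ b, 0 < b → IntegrableOn k (Icc 0 b)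
  modulus_nonneg : ∀ s, 0 ≤ s → 0 ≤ k s
  integrableOn_zero : ∀ b, 0 < b → IntegrableOn (fun s => Φ s 0) (Icc 0 b)
  lipschitz : ∀ s, 0 ≤ s → ∀ y y', ‖Φ s y - Φ s y'‖ ≤ k s * ‖y - y'‖
  aestronglyMeasurable_comp : ∀ (u : ℝ → W) (a b : ℝ), 0 ≤ a → ContinuousOn u (Icc a b) →
    AEStronglyMeasurable (fun s => Φ s (u s)) (volume.restrict (Icc a b))

variable {Φ : ℝ → W → W} {k : ℝ → ℝ} {a b c : ℝ} {u u' : ℝ → W}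

theorem IsLipschitzCaratheodory.integrableOn_comp (hΦ : IsLipschitzCaratheodory Φ k) (ha : 0 ≤ a)
    (hu : ContinuousOn u (Icc a b)) : IntegrableOn (fun s => Φ s (u s)) (Icc a b) := by
  obtain ⟨M, hM⟩ := isCompact_Icc.exists_bound_of_continuousOn hu
  have hk := integrableOn_Icc_of_forall_integrableOn_Icc_zero hΦ.integrableOn_modulus ha (b := b)
  have h0 := integrableOn_Icc_of_forall_integrableOn_Icc_zero hΦ.integrableOn_zero ha (b := b)
  refine Integrable.mono' ((hk.mul_const M).add h0.norm) (hΦ.aestronglyMeasurable_comp u a b ha hu)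
    ((ae_restrict_iff' measurableSet_Icc).2 (.of_forall fun s hs => ?_))
  have hs0 : 0 ≤ s := ha.trans hs.1
  have hlip : ‖Φ s (u s) - Φ s 0‖ ≤ k s * ‖u s‖ := by
    simpa using hΦ.lipschitz s hs0 (u s) 0
  calc ‖Φ s (u s)‖ ≤ ‖Φ s 0‖ + ‖Φ s (u s) - Φ s 0‖ := norm_le_insert' _ _
    _ ≤ ‖Φ s 0‖ + k s * M :=
        add_le_add le_rfl
          (hlip.trans (mul_le_mul_of_nonneg_left (hM s hs) (hΦ.modulus_nonneg s hs0)))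
    _ = k s * M + ‖Φ s 0‖ := add_comm _ _

theorem IsLipschitzCaratheodory.intervalIntegrable_comp (hΦ : IsLipschitzCaratheodory Φ k)
    (ha : 0 ≤ a) (hu : ContinuousOn u (Icc a b)) {x y : ℝ} (hx : x ∈ Icc a b)
    (hy : y ∈ Icc a b) :
    IntervalIntegrable (fun s => Φ s (u s)) volume x y :=
  ((hΦ.integrableOn_comp ha hu).mono_set (uIcc_subset_Icc hx hy)).intervalIntegrable

variable [NormedSpace ℝ W]

def IsIntegralSolutionOn (Φ : ℝ → W → W) (a b : ℝ) (u : ℝ → W) : Prop :=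
  ContinuousOn u (Icc a b) ∧ ∀ t ∈ Icc a b, u t = u a + ∫ s in a..t, Φ s (u s)

namespace IsLipschitzCaratheodory

theorem norm_integral_sub_le (hΦ : IsLipschitzCaratheodory Φ k) (ha : 0 ≤ a)
    (hu : ContinuousOn u (Icc a b)) (hu' : ContinuousOn u' (Icc a b)) {D : ℝ}
    (hD : ∀ s ∈ Icc a b, ‖u s - u' s‖ ≤ D) {t : ℝ} (ht : t ∈ Icc a b) :
    ‖(∫ s in a..t, Φ s (u s)) - ∫ s in a..t, Φ s (u' s)‖ ≤ (∫ s in a..b, k s) * D := by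
  have hab : a ≤ b := ht.1.trans ht.2
  have hk := integrableOn_Icc_of_forall_integrableOn_Icc_zero hΦ.integrableOn_modulus ha (b := b)
  have hD0 : 0 ≤ D := (norm_nonneg _).trans (hD a (left_mem_Icc.2 hab))
  rw [← intervalIntegral.integral_sub (hΦ.intervalIntegrable_comp ha hu (left_mem_Icc.2 hab) ht)
    (hΦ.intervalIntegrable_comp ha hu' (left_mem_Icc.2 hab) ht)]
  calc _ ≤ ∫ s in a..t, k s * D := by
        refine intervalIntegral.norm_integral_le_of_norm_le ht.1 (.of_forall fun s hs => ?_)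
          ((hk.mono_set (uIcc_subset_Icc (left_mem_Icc.2 hab) ht)).intervalIntegrable.mul_const D)
        have hs0 : 0 ≤ s := ha.trans hs.1.le
        exact (hΦ.lipschitz s hs0 _ _).trans (mul_le_mul_of_nonneg_left
          (hD s ⟨hs.1.le, hs.2.trans ht.2⟩) (hΦ.modulus_nonneg s hs0))
    _ = (∫ s in a..t, k s) * D := intervalIntegral.integral_mul_const _ _
    _ ≤ (∫ s in a..b, k s) * D := by
        gcongr
        exact intervalIntegral.integral_mono_interval le_rfl ht.1 ht.2
          ((ae_restrict_iff' measurableSet_Ioc).2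
            (.of_forall fun s hs => hΦ.modulus_nonneg s (ha.trans hs.1.le)))
          (uIcc_of_le hab ▸ hk).intervalIntegrable

noncomputable def picardMap (hΦ : IsLipschitzCaratheodory Φ k) (ha : 0 ≤ a) (hab : a ≤ b)
    (u₀ : W) (f : C(Icc a b, W)) : C(Icc a b, W) where
  toFun t := u₀ + ∫ s in a..t, Φ s (IccExtend hab f s)
  continuous_toFun := by
    have hint : IntegrableOn (fun s => Φ s (IccExtend hab f s)) (uIcc a b) := by
      rw [uIcc_of_le hab]
      exact hΦ.integrableOn_comp ha (continuous_IccExtend_iff.2 f.continuous).continuousOn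
    have hprim := intervalIntegral.continuousOn_primitive_interval hint
    rw [uIcc_of_le hab] at hprim
    exact continuous_const.add (hprim.comp_continuous continuous_subtype_val Subtype.prop)

theorem picardMap_apply (hΦ : IsLipschitzCaratheodory Φ k) (ha : 0 ≤ a) (hab : a ≤ b) (u₀ : W)
    {f : C(Icc a b, W)} (hf : ∀ t : Icc a b, f t = u t) (t : Icc a b) :
    hΦ.picardMap ha hab u₀ f t = u₀ + ∫ s in a..t, Φ s (u s) := by
  refine congrArg (u₀ + ·) (intervalIntegral.integral_congr fun s hs => ?_)
  rw [IccExtend_of_mem hab f (uIcc_subset_Icc (left_mem_Icc.2 hab) t.2 hs), hf]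

theorem dist_picardMap_le (hΦ : IsLipschitzCaratheodory Φ k) (ha : 0 ≤ a) (hab : a ≤ b)
    (u₀ : W) (f g : C(Icc a b, W)) :
    dist (hΦ.picardMap ha hab u₀ f) (hΦ.picardMap ha hab u₀ g)
      ≤ (∫ s in a..b, k s) * dist f g := by
  have hk : 0 ≤ ∫ s in a..b, k s :=
    intervalIntegral.integral_nonneg hab fun s hs => hΦ.modulus_nonneg s (ha.trans hs.1)
  refine (ContinuousMap.dist_le (mul_nonneg hk dist_nonneg)).2 fun t => ?_
  rw [dist_eq_norm, picardMap_apply hΦ ha hab u₀ (fun t => (IccExtend_val hab f t).symm),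
    picardMap_apply hΦ ha hab u₀ (fun t => (IccExtend_val hab g t).symm),
    add_sub_add_left_eq_sub]
  refine hΦ.norm_integral_sub_le ha (continuous_IccExtend_iff.2 f.continuous).continuousOn
    (continuous_IccExtend_iff.2 g.continuous).continuousOn (fun s hs => ?_) t.2
  rw [IccExtend_of_mem hab f hs, IccExtend_of_mem hab g hs, ← dist_eq_norm]
  exact ContinuousMap.dist_apply_le_dist _

theorem existsUnique_isIntegralSolutionOn_of_integral_le_half [CompleteSpace W]
    (hΦ : IsLipschitzCaratheodory Φ k) (ha : 0 ≤ a) (hab : a ≤ b)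
    (hsmall : ∫ s in a..b, k s ≤ 1 / 2) (u₀ : W) :
    ∃ u, IsIntegralSolutionOn Φ a b u ∧ u a = u₀ ∧
      ∀ u', IsIntegralSolutionOn Φ a b u' → u' a = u₀ → EqOn u' u (Icc a b) := by
  set T := hΦ.picardMap ha hab u₀
  have hT : ContractingWith (1 / 2) T := by
    refine ⟨by norm_num, LipschitzWith.of_dist_le_mul fun f g => ?_⟩
    refine (hΦ.dist_picardMap_le ha hab u₀ f g).trans ?_
    push_cast
    exact mul_le_mul_of_nonneg_right hsmall dist_nonneg
  set f := ContractingWith.fixedPoint T hT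
  have hf : ∀ t : Icc a b, f t = T f t := fun t => by rw [hT.fixedPoint_isFixedPt]
  have hu : ∀ t ∈ Icc a b, IccExtend hab f t = u₀ + ∫ s in a..t, Φ s (IccExtend hab f s) :=
    fun t ht => by
      rw [IccExtend_of_mem hab f ht, hf,
        picardMap_apply hΦ ha hab u₀ (fun t => (IccExtend_val hab f t).symm)]
  have hua : IccExtend hab f a = u₀ := by simpa using hu a (left_mem_Icc.2 hab)
  refine ⟨IccExtend hab f, ⟨(continuous_IccExtend_iff.2 f.continuous).continuousOn, hua ▸ hu⟩, hua,
    fun u' hu' hu'a => ?_⟩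
  -- the restriction of `u'` to `[a, b]` is a fixed point of `T`, hence equal to `f`
  set f' : C(Icc a b, W) := ⟨(Icc a b).domRestrict u', hu'.1.domRestrict⟩
  have hfix : Function.IsFixedPt T f' := ContinuousMap.ext fun t => by
    rw [picardMap_apply hΦ ha hab u₀ (fun _ => rfl), ← hu'a]
    exact (hu'.2 t t.2).symm
  intro t ht
  have hf' : f' = f := hT.fixedPoint_unique hfix
  rw [IccExtend_of_mem hab f ht, ← hf']
  rfl

end IsLipschitzCaratheodory

namespace IsIntegralSolutionOn

theorem congr (h : IsIntegralSolutionOn Φ a b u) (e : EqOn u' u (Icc a b)) :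
    IsIntegralSolutionOn Φ a b u' := by
  refine ⟨h.1.congr e, fun t ht => ?_⟩
  have hab : a ≤ b := ht.1.trans ht.2
  rw [e ht, e (left_mem_Icc.2 hab), h.2 t ht]
  exact congrArg _ (intervalIntegral.integral_congr fun s hs =>
    congrArg (Φ s) (e (uIcc_subset_Icc (left_mem_Icc.2 hab) ht hs)).symm)

theorem mono_right (h : IsIntegralSolutionOn Φ a b u) (hcb : c ≤ b) :
    IsIntegralSolutionOn Φ a c u :=
  ⟨h.1.mono (Icc_subset_Icc_right hcb), fun t ht => h.2 t ⟨ht.1, ht.2.trans hcb⟩⟩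

theorem mono_left (hΦ : IsLipschitzCaratheodory Φ k) (ha : 0 ≤ a)
    (h : IsIntegralSolutionOn Φ a b u) (hc : c ∈ Icc a b) : IsIntegralSolutionOn Φ c b u := by
  refine ⟨h.1.mono (Icc_subset_Icc_left hc.1), fun t ht => ?_⟩
  have htI : t ∈ Icc a b := ⟨hc.1.trans ht.1, ht.2⟩
  rw [h.2 t htI, h.2 c hc, add_assoc, intervalIntegral.integral_add_adjacent_intervals
    (hΦ.intervalIntegrable_comp ha h.1 (left_mem_Icc.2 (hc.1.trans hc.2)) hc)
    (hΦ.intervalIntegrable_comp ha h.1 hc htI)]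

theorem union (hΦ : IsLipschitzCaratheodory Φ k) (ha : 0 ≤ a)
    (h₁ : IsIntegralSolutionOn Φ a c u) (h₂ : IsIntegralSolutionOn Φ c b u) (hc : c ∈ Icc a b) :
    IsIntegralSolutionOn Φ a b u := by
  have hu : ContinuousOn u (Icc a b) := by
    rw [← Icc_union_Icc_eq_Icc hc.1 hc.2]
    exact h₁.1.union_of_isClosed h₂.1 isClosed_Icc isClosed_Icc
  refine ⟨hu, fun t ht => ?_⟩
  rcases le_total t c with htc | hct
  · exact h₁.2 t ⟨ht.1, htc⟩
  · rw [h₂.2 t ⟨hct, ht.2⟩, h₁.2 c ⟨hc.1, le_rfl⟩, add_assoc,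
      intervalIntegral.integral_add_adjacent_intervals
        (hΦ.intervalIntegrable_comp ha hu (left_mem_Icc.2 (hc.1.trans hc.2)) hc)
        (hΦ.intervalIntegrable_comp ha hu hc ht)]

theorem eqOn [CompleteSpace W] (hΦ : IsLipschitzCaratheodory Φ k) (ha : 0 ≤ a)
    (h : IsIntegralSolutionOn Φ a b u) (h' : IsIntegralSolutionOn Φ a b u') (h0 : u a = u' a) :
    EqOn u u' (Icc a b) := by
  intro t ht
  refine Icc_induction_of_integral_le (ht.1.trans ht.2) one_half_pos
    (integrableOn_Icc_of_forall_integrableOn_Icc_zero hΦ.integrableOn_modulus ha)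
    (fun x y => ∀ u u', IsIntegralSolutionOn Φ x y u → IsIntegralSolutionOn Φ x y u' →
      u x = u' x → EqOn u u' (Icc x y)) ?_ ?_ u u' h h' h0 ht
  · intro x hx y hy hsmall v v' hv hv' hv₀
    obtain ⟨w, -, -, hw⟩ := hΦ.existsUnique_isIntegralSolutionOn_of_integral_le_half
      (ha.trans hx.1) hy.1 hsmall (v x)
    exact fun s hs => (hw v hv rfl hs).trans (hw v' hv' hv₀.symm hs).symm
  · intro x hx y hy hxy hyb v v' hv hv' hv₀ s hs
    have hx0 : 0 ≤ x := ha.trans hx.1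
    have e₁ := hxy v v' (hv.mono_right hy.2) (hv'.mono_right hy.2) hv₀
    rcases le_total s y with hsy | hys
    · exact e₁ ⟨hs.1, hsy⟩
    · exact hyb v v' (hv.mono_left hΦ hx0 hy) (hv'.mono_left hΦ hx0 hy)
        (e₁ ⟨hy.1, le_rfl⟩) ⟨hys, hs.2⟩

end IsIntegralSolutionOn

namespace IsLipschitzCaratheodory

theorem exists_isIntegralSolutionOn [CompleteSpace W] (hΦ : IsLipschitzCaratheodory Φ k)
    (ha : 0 ≤ a) (hab : a ≤ b) (u₀ : W) : ∃ u, IsIntegralSolutionOn Φ a b u ∧ u a = u₀ := by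
  refine Icc_induction_of_integral_le hab one_half_pos
    (integrableOn_Icc_of_forall_integrableOn_Icc_zero hΦ.integrableOn_modulus ha)
    (fun x y => ∀ u₀, ∃ u, IsIntegralSolutionOn Φ x y u ∧ u x = u₀) ?_ ?_ u₀
  · intro x hx y hy hsmall u₀
    obtain ⟨u, hu, hu₀, -⟩ := hΦ.existsUnique_isIntegralSolutionOn_of_integral_le_half
      (ha.trans hx.1) hy.1 hsmall u₀
    exact ⟨u, hu, hu₀⟩
  · intro x hx y hy hxy hyb u₀
    obtain ⟨u₁, hu₁, hu₁₀⟩ := hxy u₀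
    obtain ⟨u₂, hu₂, hu₂y⟩ := hyb (u₁ y)
    have e₁ : EqOn (fun t => if t ≤ y then u₁ t else u₂ t) u₁ (Icc x y) :=
      fun t ht => if_pos ht.2
    have e₂ : EqOn (fun t => if t ≤ y then u₁ t else u₂ t) u₂ (Icc y b) := fun t ht => by
      rcases ht.1.eq_or_lt with rfl | hyt
      · simp [hu₂y]
      · simp [not_le.2 hyt]
    exact ⟨_, (hu₁.congr e₁).union hΦ (ha.trans hx.1) (hu₂.congr e₂) ⟨hy.1, hy.2⟩,
      (e₁ (left_mem_Icc.2 hy.1)).trans hu₁₀⟩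

theorem exists_forall_isIntegralSolutionOn [CompleteSpace W] (hΦ : IsLipschitzCaratheodory Φ k)
    (u₀ : W) : ∃ u, u 0 = u₀ ∧ ∀ b, 0 ≤ b → IsIntegralSolutionOn Φ 0 b u := by
  choose! sol hsol hsol₀ using fun b (hb : 0 ≤ b) => hΦ.exists_isIntegralSolutionOn le_rfl hb u₀
  have hpatch : ∀ b, 0 ≤ b → EqOn (fun t => sol t t) (sol b) (Icc 0 b) := fun b hb t ht =>
    (hsol t ht.1).eqOn hΦ le_rfl ((hsol b hb).mono_right ht.2)
      ((hsol₀ t ht.1).trans (hsol₀ b hb).symm) (right_mem_Icc.2 ht.1)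
  exact ⟨fun t => sol t t, hsol₀ 0 le_rfl, fun b hb => (hsol b hb).congr (hpatch b hb)⟩

end IsLipschitzCaratheodory

end Caratheodory

section SecondOrder

variable {E : Type*} [NormedAddCommGroup E] [NormedSpace ℝ E] {σ τ : ℝ → ℝ} {F : E → E}

def secondOrderField (σ τ : ℝ → ℝ) (F : E → E) (s : ℝ) (y : E × E) : E × E :=
  (y.2, -(σ s • y.2 + τ s • F y.1))

theorem isLipschitzCaratheodory_secondOrderField {K : NNReal}
    (hσ : ∀ b, 0 < b → IntegrableOn σ (Icc 0 b)) (hτ : ∀ b, 0 < b → IntegrableOn τ (Icc 0 b))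
    (hF : LipschitzWith K F) :
    IsLipschitzCaratheodory (secondOrderField σ τ F) (fun s => 1 + ‖σ s‖ + K * ‖τ s‖) where
  integrableOn_modulus b hb :=
    ((integrableOn_const measure_Icc_lt_top.ne).add (hσ b hb).norm).add
      ((hτ b hb).norm.const_mul _)
  modulus_nonneg s _ := by positivity
  integrableOn_zero b hb := by
    have h : IntegrableOn (fun s => ((0 : E), -(τ s • F 0))) (Icc 0 b) :=
      (integrable_zero _ E _).prodMk ((hτ b hb).smul_const (F 0)).neg
    simpa [secondOrderField] using h
  lipschitz s _ y y' := by
    have h₁ : ‖y.1 - y'.1‖ ≤ ‖y - y'‖ := norm_fst_le (y - y')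
    have h₂ : ‖y.2 - y'.2‖ ≤ ‖y - y'‖ := norm_snd_le (y - y')
    have hF' : ‖F y.1 - F y'.1‖ ≤ K * ‖y - y'‖ :=
      (hF.norm_sub_le _ _).trans (mul_le_mul_of_nonneg_left h₁ K.2)
    refine norm_prod_le_iff.2 ⟨?_, ?_⟩ <;> simp only [secondOrderField, Prod.fst_sub, Prod.snd_sub]
    · nlinarith [mul_nonneg (norm_nonneg (σ s)) (norm_nonneg (y - y')),
        mul_nonneg (mul_nonneg K.coe_nonneg (norm_nonneg (τ s))) (norm_nonneg (y - y'))]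
    · have e : -(σ s • y.2 + τ s • F y.1) - -(σ s • y'.2 + τ s • F y'.1)
          = -(σ s • (y.2 - y'.2) + τ s • (F y.1 - F y'.1)) := by
        simp only [smul_sub]
        abel
      rw [e, norm_neg]
      calc _ ≤ ‖σ s‖ * ‖y.2 - y'.2‖ + ‖τ s‖ * ‖F y.1 - F y'.1‖ := by
            rw [← norm_smul, ← norm_smul]
            exact norm_add_le _ _
        _ ≤ (1 + ‖σ s‖ + K * ‖τ s‖) * ‖y - y'‖ := by
            nlinarith [mul_le_mul_of_nonneg_left h₂ (norm_nonneg (σ s)),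
              mul_le_mul_of_nonneg_left hF' (norm_nonneg (τ s)), norm_nonneg (y - y')]
  aestronglyMeasurable_comp u a b ha hu := by
    have hu' := hu.aestronglyMeasurable (μ := volume) measurableSet_Icc
    exact (continuous_snd.comp_aestronglyMeasurable hu').prodMk
      (((integrableOn_Icc_of_forall_integrableOn_Icc_zero hσ ha).aestronglyMeasurable.smul
          (continuous_snd.comp_aestronglyMeasurable hu')).add
        ((integrableOn_Icc_of_forall_integrableOn_Icc_zero hτ ha).aestronglyMeasurable.smul
          (hF.continuous.comp_aestronglyMeasurable
            (continuous_fst.comp_aestronglyMeasurable hu')))).neg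

end SecondOrder

section Dynamics

variable {d : ℕ} {σ τ : ℝ → ℝ} {ψ : EuclideanSpace ℝ (Fin d) → Set (EuclideanSpace ℝ (Fin d))}
  {V : EuclideanSpace ℝ (Fin d) → EuclideanSpace ℝ (Fin d)} {μ : ℝ}
  {a₀ b₀ : EuclideanSpace ℝ (Fin d)} {k : ℝ → ℝ}

theorem IsStrongGlobalSolution.of_isIntegralSolutionOn
    {u : ℝ → EuclideanSpace ℝ (Fin d) × EuclideanSpace ℝ (Fin d)}
    (hΦ : IsLipschitzCaratheodory (secondOrderField σ τ (qviResidual ψ V μ)) k)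
    (hu₀ : u 0 = (a₀, b₀))
    (hu : ∀ b, 0 ≤ b → IsIntegralSolutionOn (secondOrderField σ τ (qviResidual ψ V μ)) 0 b u) :
    IsStrongGlobalSolution σ τ ψ V μ a₀ b₀ (fun t => (u t).1) (fun t => (u t).2) := by
  have hi : ∀ t, 0 ≤ t → IntervalIntegrable
      (fun s => secondOrderField σ τ (qviResidual ψ V μ) s (u s)) volume 0 t := fun t ht =>
    hΦ.intervalIntegrable_comp le_rfl (hu t ht).1 (left_mem_Icc.2 ht) (right_mem_Icc.2 ht)
  refine ⟨by simp [hu₀], by simp [hu₀],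
    fun q hq => (continuous_snd.comp_continuousOn (hu q hq.le).1).integrableOn_Icc,
    fun t ht => ?_, fun t => (secondOrderField σ τ (qviResidual ψ V μ) t (u t)).2,
    fun q hq => (hΦ.integrableOn_comp le_rfl (hu q hq.le).1).snd, fun t ht => ?_,
    .of_forall fun t => ?_⟩
  · dsimp only
    rw [(hu t ht).2 t (right_mem_Icc.2 ht), Prod.fst_add, intervalIntegral.fst_integral (hi t ht),
      hu₀]
    rfl
  · dsimp only
    rw [(hu t ht).2 t (right_mem_Icc.2 ht), Prod.snd_add, intervalIntegral.snd_integral (hi t ht),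
      hu₀]
  · simp only [secondOrderField, qviResidual]
    abel

theorem IsStrongGlobalSolution.isIntegralSolutionOn {x v : ℝ → EuclideanSpace ℝ (Fin d)}
    (h : IsStrongGlobalSolution σ τ ψ V μ a₀ b₀ x v)
    (hΦ : IsLipschitzCaratheodory (secondOrderField σ τ (qviResidual ψ V μ)) k) {q : ℝ}
    (hq : 0 < q) :
    IsIntegralSolutionOn (secondOrderField σ τ (qviResidual ψ V μ)) 0 q (fun t => (x t, v t)) := by
  obtain ⟨hx₀, hv₀, hv, hx, w, hw, hvw, hxvw⟩ := h
  have hu : ContinuousOn (fun t => (x t, v t)) (Icc 0 q) :=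
    (continuousOn_Icc_of_eq_add_integral hq.le (hv q hq) fun t ht => hx t ht.1).prodMk
      (continuousOn_Icc_of_eq_add_integral hq.le (hw q hq) fun t ht => hvw t ht.1)
  refine ⟨hu, fun t ht => ?_⟩
  have hi := hΦ.intervalIntegrable_comp le_rfl hu (left_mem_Icc.2 hq.le) ht
  have hw' : ∫ s in (0 : ℝ)..t, w s
      = ∫ s in (0 : ℝ)..t, (secondOrderField σ τ (qviResidual ψ V μ) s (x s, v s)).2 := by
    refine intervalIntegral.integral_congr_ae ?_
    filter_upwards [(ae_restrict_iff' measurableSet_Ici).1 hxvw] with s hs hsI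
    rw [uIoc_of_le ht.1] at hsI
    rw [add_assoc] at hs
    exact eq_neg_of_add_eq_zero_left (hs hsI.1.le)
  refine Prod.ext ?_ ?_
  · simp only [Prod.fst_add, intervalIntegral.fst_integral hi, hx₀]
    exact hx t ht.1
  · simp only [Prod.snd_add, intervalIntegral.snd_integral hi, hv₀, ← hw']
    exact hvw t ht.1

end Dynamics

theorem stmt_5_general {d : ℕ} (σ τ : ℝ → ℝ)
    (hσint : ∀ s : ℝ, 0 < s → IntegrableOn σ (Set.Icc 0 s))
    (hτint : ∀ s : ℝ, 0 < s → IntegrableOn τ (Set.Icc 0 s))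
    (ψ : EuclideanSpace ℝ (Fin d) → Set (EuclideanSpace ℝ (Fin d)))
    (V : EuclideanSpace ℝ (Fin d) → EuclideanSpace ℝ (Fin d)) (L μ ρ : ℝ)
    (hΓ₁ : ∀ x, (ψ x).Nonempty ∧ IsClosed (ψ x) ∧ Convex ℝ (ψ x))
    (hL : ∀ y z, ‖V y - V z‖ ≤ L * ‖y - z‖)
    (hproj : ∀ y r s, ‖metricProj (ψ r) y - metricProj (ψ s) y‖ ≤ ρ * ‖r - s‖)
    (a₀ b₀ : EuclideanSpace ℝ (Fin d)) :
    ∃ x v : ℝ → EuclideanSpace ℝ (Fin d),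
      IsStrongGlobalSolution σ τ ψ V μ a₀ b₀ x v ∧
      ∀ x₂ v₂ : ℝ → EuclideanSpace ℝ (Fin d),
        IsStrongGlobalSolution σ τ ψ V μ a₀ b₀ x₂ v₂ → ∀ t : ℝ, 0 ≤ t → x₂ t = x t := by
  have hΦ := isLipschitzCaratheodory_secondOrderField hσint hτint
    (lipschitzWith_qviResidual hΓ₁ hproj hL μ)
  obtain ⟨u, hu₀, hu⟩ := hΦ.exists_forall_isIntegralSolutionOn (a₀, b₀)
  refine ⟨_, _, .of_isIntegralSolutionOn hΦ hu₀ hu, fun x v h t ht => ?_⟩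
  have h_eq := (h.isIntegralSolutionOn hΦ (by linarith : (0 : ℝ) < t + 1)).eqOn hΦ le_rfl
    (hu (t + 1) (by linarith)) (by rw [hu₀, h.1, h.2.1])
  exact congrArg Prod.fst (h_eq ⟨ht, by linarith⟩)

/-- Existence and uniqueness of the strong global solution of the second-order
dynamical system, for measurable, locally integrable, nonnegative coefficients `σ, τ`. -/
theorem stmt_5 {d : ℕ} (σ τ : ℝ → ℝ)
    (hσmeas : Measurable σ) (hτmeas : Measurable τ)
    (hσnonneg : ∀ t, 0 ≤ t → 0 ≤ σ t) (hτnonneg : ∀ t, 0 ≤ t → 0 ≤ τ t)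
    (hσint : ∀ s : ℝ, 0 < s → IntegrableOn σ (Set.Icc 0 s))
    (hτint : ∀ s : ℝ, 0 < s → IntegrableOn τ (Set.Icc 0 s))
    (ψ : EuclideanSpace ℝ (Fin d) → Set (EuclideanSpace ℝ (Fin d)))
    (V : EuclideanSpace ℝ (Fin d) → EuclideanSpace ℝ (Fin d)) (L η μ ρ : ℝ)
    (hΓ₁ : ∀ x, (ψ x).Nonempty ∧ IsClosed (ψ x) ∧ Convex ℝ (ψ x))
    (hL : ∀ y z, ‖V y - V z‖ ≤ L * ‖y - z‖)
    (hη : ∀ y z, η * ‖y - z‖ ^ 2 ≤ ⟪V y - V z, y - z⟫)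
    (hμ : 0 < μ) (hρ : 0 < ρ)
    (hproj : ∀ y r s, ‖metricProj (ψ r) y - metricProj (ψ s) y‖ ≤ ρ * ‖r - s‖)
    (a₀ b₀ : EuclideanSpace ℝ (Fin d)) :
    ∃ x v : ℝ → EuclideanSpace ℝ (Fin d),
      IsStrongGlobalSolution σ τ ψ V μ a₀ b₀ x v ∧
      ∀ x₂ v₂ : ℝ → EuclideanSpace ℝ (Fin d),
        IsStrongGlobalSolution σ τ ψ V μ a₀ b₀ x₂ v₂ → ∀ t : ℝ, 0 ≤ t → x₂ t = x t :=
  stmt_5_general σ τ hσint hτint ψ V L μ ρ hΓ₁ hL hproj a₀ b₀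
end

section
/- Let ψ : ℝⁿ ⇉ ℝⁿ satisfy the (Γ₁)-condition and V : ℝⁿ → ℝⁿ be L-Lipschitz continuous and η-strongly monotone. Let μ > 0 and ρ > 0 satisfy ‖P_{ψ(r)}(y) − P_{ψ(s)}(y)‖ ≤ ρ‖r − s‖ for all y, r, s ∈ ℝⁿ, and assume θ := η − ρ − 1/2 − L²/2 − μ²/2 + μη > 0. Let x* be a solution of the inverse quasi-variational inequality problem. Then for all w ∈ ℝⁿ, θ ‖w − x*‖ ≤ ‖V(w) − P_{ψ(w)}(V(w) − μw)‖. -/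
open scoped RealInnerProductSpace
open MeasureTheory

/-! The solution is a fixed point: `V x* = P_{ψ x*}(V x* - μ x*)`. For `p = P_{ψ w}(V w - μ w)`,
moving the set costs at most `ρ ‖w - x*‖` and `P_{ψ x*}` is nonexpansive, so
`‖p - V x*‖ ≤ ρ ‖w - x*‖ + ‖(V w - V x*) - μ (w - x*)‖`, and the last norm squared is at most
`(L² + μ² - 2μη) ‖w - x*‖²`. Strong monotonicity gives `η ‖w - x*‖² ≤ ‖V w - V x*‖ ‖w - x*‖`;
splitting `V w - V x*` at `p` and applying AM-GM `m n ≤ (m² + n²) / 2` to the last term yields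
`θ ‖w - x*‖² ≤ ‖V w - p‖ ‖w - x*‖`. -/

section InnerProductSpace

variable {F : Type*} [NormedAddCommGroup F] [InnerProductSpace ℝ F]

/-- Firm nonexpansiveness of the projection onto a convex set, with `p = P x` and `q = P y`
given by their variational inequalities. -/
lemma norm_sub_sq_le_inner_of_inner_nonpos {x y p q : F} (hp : ⟪x - p, q - p⟫ ≤ 0)
    (hq : ⟪y - q, p - q⟫ ≤ 0) : ‖p - q‖ ^ 2 ≤ ⟪x - y, p - q⟫ := by
  have hsplit : ⟪x - y, p - q⟫ - ‖p - q‖ ^ 2 = -⟪x - p, q - p⟫ - ⟪y - q, p - q⟫ := by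
    rw [← real_inner_self_eq_norm_sq, ← inner_sub_left, ← neg_sub p q, inner_neg_right, neg_neg,
      ← inner_sub_left]
    congr 1; abel
  linarith

lemma norm_sub_smul_sq_le {a u : F} {L η μ : ℝ} (hL : ‖a‖ ≤ L * ‖u‖)
    (hη : η * ‖u‖ ^ 2 ≤ ⟪a, u⟫) (hμ : 0 ≤ μ) :
    ‖a - μ • u‖ ^ 2 ≤ (L ^ 2 + μ ^ 2 - 2 * μ * η) * ‖u‖ ^ 2 := by
  have hexpand : ‖a - μ • u‖ ^ 2 = ‖a‖ ^ 2 - 2 * μ * ⟪a, u⟫ + μ ^ 2 * ‖u‖ ^ 2 := by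
    rw [norm_sub_sq_real, real_inner_smul_right, norm_smul, mul_pow, Real.norm_eq_abs, sq_abs]
    ring
  have hLsq : ‖a‖ ^ 2 ≤ L ^ 2 * ‖u‖ ^ 2 := by
    rw [← mul_pow]; exact pow_le_pow_left₀ (norm_nonneg a) hL 2
  nlinarith

end InnerProductSpace

namespace metricProj

variable {d : ℕ} {C : Set (EuclideanSpace ℝ (Fin d))}

lemma mem_and_isNearest (hne : C.Nonempty) (hcl : IsClosed C) (x : EuclideanSpace ℝ (Fin d)) :
    metricProj C x ∈ C ∧ ∀ z ∈ C, ‖x - metricProj C x‖ ≤ ‖x - z‖ := by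
  have hex : ∃ y, y ∈ C ∧ ∀ z ∈ C, ‖x - y‖ ≤ ‖x - z‖ := by
    obtain ⟨y, hy, hdist⟩ := hcl.exists_infDist_eq_dist hne x
    refine ⟨y, hy, fun z hz => ?_⟩
    simpa only [← dist_eq_norm, ← hdist] using Metric.infDist_le_dist_of_mem hz
  rw [metricProj, dif_pos hex]
  exact hex.choose_spec

lemma inner_sub_nonpos (hne : C.Nonempty) (hcl : IsClosed C) (hconv : Convex ℝ C)
    (x : EuclideanSpace ℝ (Fin d)) :
    ∀ z ∈ C, ⟪x - metricProj C x, z - metricProj C x⟫ ≤ 0 := by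
  obtain ⟨hmem, hnear⟩ := mem_and_isNearest hne hcl x
  have : Nonempty C := hne.to_subtype
  have hbdd : BddBelow (Set.range fun z : C => ‖x - (z : EuclideanSpace ℝ (Fin d))‖) :=
    ⟨0, by rintro _ ⟨z, rfl⟩; positivity⟩
  refine (norm_eq_iInf_iff_real_inner_le_zero hconv hmem).mp (le_antisymm ?_ ?_)
  · exact le_ciInf fun z => hnear z z.2
  · exact ciInf_le hbdd ⟨_, hmem⟩

lemma eq_of_inner_nonpos (hne : C.Nonempty) (hcl : IsClosed C) (hconv : Convex ℝ C)
    {x q : EuclideanSpace ℝ (Fin d)} (hq : q ∈ C) (hvar : ∀ z ∈ C, ⟪x - q, z - q⟫ ≤ 0) :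
    metricProj C x = q := by
  have hle := norm_sub_sq_le_inner_of_inner_nonpos
    (inner_sub_nonpos hne hcl hconv x q hq) (hvar _ (mem_and_isNearest hne hcl x).1)
  rw [sub_self, inner_zero_left] at hle
  exact sub_eq_zero.mp (by simpa using hle.antisymm (sq_nonneg _))

lemma norm_sub_le (hne : C.Nonempty) (hcl : IsClosed C) (hconv : Convex ℝ C)
    (x y : EuclideanSpace ℝ (Fin d)) : ‖metricProj C x - metricProj C y‖ ≤ ‖x - y‖ := by
  have hsq := norm_sub_sq_le_inner_of_inner_nonpos
    (inner_sub_nonpos hne hcl hconv x _ (mem_and_isNearest hne hcl y).1)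
    (inner_sub_nonpos hne hcl hconv y _ (mem_and_isNearest hne hcl x).1)
  nlinarith [real_inner_le_norm (x - y) (metricProj C x - metricProj C y),
    norm_nonneg (metricProj C x - metricProj C y), norm_nonneg (x - y)]

lemma sub_smul_eq_of_inner_nonneg (hne : C.Nonempty) (hcl : IsClosed C) (hconv : Convex ℝ C)
    {v x : EuclideanSpace ℝ (Fin d)} (hv : v ∈ C) (hvar : ∀ z ∈ C, 0 ≤ ⟪x, z - v⟫) {μ : ℝ}
    (hμ : 0 ≤ μ) : metricProj C (v - μ • x) = v := by
  refine eq_of_inner_nonpos hne hcl hconv hv fun z hz => ?_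
  rw [sub_sub_cancel_left, inner_neg_left, real_inner_smul_left, neg_nonpos]
  exact mul_nonneg hμ (hvar z hz)

end metricProj

theorem stmt_7_general {d : ℕ} (ψ : EuclideanSpace ℝ (Fin d) → Set (EuclideanSpace ℝ (Fin d)))
    (V : EuclideanSpace ℝ (Fin d) → EuclideanSpace ℝ (Fin d)) (L η μ ρ θ : ℝ)
    (hΓ₁ : ∀ x, (ψ x).Nonempty ∧ IsClosed (ψ x) ∧ Convex ℝ (ψ x))
    (hL : ∀ y z, ‖V y - V z‖ ≤ L * ‖y - z‖)
    (hη : ∀ y z, η * ‖y - z‖ ^ 2 ≤ ⟪V y - V z, y - z⟫)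
    (hμ : 0 < μ)
    (hproj : ∀ y r s, ‖metricProj (ψ r) y - metricProj (ψ s) y‖ ≤ ρ * ‖r - s‖)
    (hθ : θ = η - ρ - 1/2 - L^2/2 - μ^2/2 + μ*η)
    (xs : EuclideanSpace ℝ (Fin d))
    (hxs : V xs ∈ ψ xs ∧ ∀ z ∈ ψ xs, 0 ≤ ⟪xs, z - V xs⟫) :
    ∀ w : EuclideanSpace ℝ (Fin d),
      θ * ‖w - xs‖ ≤ ‖V w - metricProj (ψ w) (V w - μ • w)‖ := by
  intro w
  obtain ⟨hne, hcl, hconv⟩ := hΓ₁ xs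
  set p := metricProj (ψ w) (V w - μ • w)
  have hfix := metricProj.sub_smul_eq_of_inner_nonneg hne hcl hconv hxs.1 hxs.2 hμ.le
  have hp : ‖p - V xs‖ ≤ ρ * ‖w - xs‖ + ‖(V w - V xs) - μ • (w - xs)‖ := calc
    ‖p - V xs‖ ≤ ‖p - metricProj (ψ xs) (V w - μ • w)‖
        + ‖metricProj (ψ xs) (V w - μ • w) - metricProj (ψ xs) (V xs - μ • xs)‖ := by
      rw [hfix]; exact norm_sub_le_norm_sub_add_norm_sub _ _ _
    _ ≤ ρ * ‖w - xs‖ + ‖(V w - μ • w) - (V xs - μ • xs)‖ :=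
      add_le_add (hproj _ _ _) (metricProj.norm_sub_le hne hcl hconv _ _)
    _ = ρ * ‖w - xs‖ + ‖(V w - V xs) - μ • (w - xs)‖ := by rw [smul_sub]; abel_nf
  have hshift := norm_sub_smul_sq_le (hL w xs) (hη w xs) hμ.le
  have hmono : η * ‖w - xs‖ ^ 2 ≤ ‖V w - V xs‖ * ‖w - xs‖ :=
    (hη w xs).trans (real_inner_le_norm _ _)
  have htri : ‖V w - V xs‖ * ‖w - xs‖ ≤ (‖V w - p‖ + ‖p - V xs‖) * ‖w - xs‖ :=
    mul_le_mul_of_nonneg_right (norm_sub_le_norm_sub_add_norm_sub _ _ _) (norm_nonneg _)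
  have hsq : θ * ‖w - xs‖ ^ 2 ≤ ‖V w - p‖ * ‖w - xs‖ := by
    nlinarith [mul_le_mul_of_nonneg_right hp (norm_nonneg (w - xs)),
      sq_nonneg (‖(V w - V xs) - μ • (w - xs)‖ - ‖w - xs‖)]
  rcases (norm_nonneg (w - xs)).eq_or_lt with hzero | hpos
  · rw [← hzero, mul_zero]; exact norm_nonneg _
  · exact le_of_mul_le_mul_right (by nlinarith) hpos

/-- If `θ := η − ρ − 1/2 − L²/2 − μ²/2 + μη > 0` and `x*` solves the IQVIP, then
`θ ‖w − x*‖ ≤ ‖V w − P_{ψ w}(V w − μ w)‖` for all `w`. -/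
theorem stmt_7 {d : ℕ} (ψ : EuclideanSpace ℝ (Fin d) → Set (EuclideanSpace ℝ (Fin d)))
    (V : EuclideanSpace ℝ (Fin d) → EuclideanSpace ℝ (Fin d)) (L η μ ρ θ : ℝ)
    (hΓ₁ : ∀ x, (ψ x).Nonempty ∧ IsClosed (ψ x) ∧ Convex ℝ (ψ x))
    (hL : ∀ y z, ‖V y - V z‖ ≤ L * ‖y - z‖)
    (hη : ∀ y z, η * ‖y - z‖ ^ 2 ≤ ⟪V y - V z, y - z⟫)
    (hμ : 0 < μ) (hρ : 0 < ρ)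
    (hproj : ∀ y r s, ‖metricProj (ψ r) y - metricProj (ψ s) y‖ ≤ ρ * ‖r - s‖)
    (hθ : θ = η - ρ - 1/2 - L^2/2 - μ^2/2 + μ*η) (hθpos : 0 < θ)
    (xs : EuclideanSpace ℝ (Fin d))
    (hxs : V xs ∈ ψ xs ∧ ∀ z ∈ ψ xs, 0 ≤ ⟪xs, z - V xs⟫) :
    ∀ w : EuclideanSpace ℝ (Fin d),
      θ * ‖w - xs‖ ≤ ‖V w - metricProj (ψ w) (V w - μ • w)‖ :=
  stmt_7_general ψ V L η μ ρ θ hΓ₁ hL hη hμ hproj hθ xs hxs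
end

section
/- Let ψ : ℝⁿ ⇉ ℝⁿ satisfy the (Γ₁)-condition and V : ℝⁿ → ℝⁿ be L-Lipschitz continuous and η-strongly monotone. Let μ > 0 and ρ > 0 satisfy ‖P_{ψ(r)}(y) − P_{ψ(s)}(y)‖ ≤ ρ‖r − s‖ for all y, r, s ∈ ℝⁿ. Let x* be a solution of the inverse quasi-variational inequality problem. Then for all w ∈ ℝⁿ, ⟨V(w) − P_{ψ(w)}(V(w) − μw), w − x*⟩ ≥ (η − ρ − 1/2 − L²/2 − μ²/2 + μη) ‖w − x*‖². -/
/-!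
Put `a = V x* − μ x*` and `b = V w − μ w`. Since `x*` solves the problem, `V x*` is the projection
of `a` onto `ψ x*`, so by nonexpansiveness of that projection `V x*` lies within `‖a − b‖` of
`Q = P_{ψ x*}(b)`, and `‖a − b‖² ≤ (L² − 2μη + μ²)‖w − x*‖²` by Lipschitz continuity and strong
monotonicity. Splitting `V w − P_{ψ w}(b)` as `(V w − V x*) + (V x* − Q) + (Q − P_{ψ w}(b))`, the
three pieces are bounded below by strong monotonicity, Young's inequality, and the
`ρ`-Lipschitz dependence of the projection on the set.
-/

open scoped RealInnerProductSpace
open MeasureTheory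

section InnerProductSpace

variable {E : Type*} [NormedAddCommGroup E] [InnerProductSpace ℝ E]

/-- Nonexpansiveness of projections onto convex sets, phrased through the variational
inequalities characterizing `p` and `q` as projections of `x` and `y`. -/
theorem norm_sub_le_of_inner_sub_nonpos {x y p q : E} (hp : ⟪x - p, q - p⟫ ≤ 0)
    (hq : ⟪y - q, p - q⟫ ≤ 0) : ‖p - q‖ ≤ ‖x - y‖ := by
  have hsplit : ⟪x - y, p - q⟫ = -⟪x - p, q - p⟫ + ‖p - q‖ ^ 2 - ⟪y - q, p - q⟫ := by
    rw [← real_inner_self_eq_norm_sq, ← inner_neg_right, neg_sub, ← inner_add_left,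
      ← inner_sub_left]
    congr 1
    abel
  have hsq : ‖p - q‖ ^ 2 ≤ ‖x - y‖ * ‖p - q‖ := by
    linarith [real_inner_le_norm (x - y) (p - q)]
  nlinarith [norm_nonneg (p - q), norm_nonneg (x - y)]

theorem neg_half_add_norm_sq_le_inner (u v : E) : -((‖u‖ ^ 2 + ‖v‖ ^ 2) / 2) ≤ ⟪u, v⟫ := by
  nlinarith [norm_add_sq_real u v, sq_nonneg ‖u + v‖]

theorem neg_mul_norm_sq_le_inner {u v : E} {c : ℝ} (h : ‖u‖ ≤ c * ‖v‖) :
    -(c * ‖v‖ ^ 2) ≤ ⟪u, v⟫ := by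
  have hcs : -(‖u‖ * ‖v‖) ≤ ⟪u, v⟫ := neg_le_of_abs_le (abs_real_inner_le_norm u v)
  nlinarith [mul_le_mul_of_nonneg_right h (norm_nonneg v)]

theorem norm_sub_smul_sub_sub_smul_sq_le {V : E → E} {L η μ : ℝ}
    (hL : ∀ y z, ‖V y - V z‖ ≤ L * ‖y - z‖) (hη : ∀ y z, η * ‖y - z‖ ^ 2 ≤ ⟪V y - V z, y - z⟫)
    (hμ : 0 ≤ μ) (y z : E) :
    ‖(V y - μ • y) - (V z - μ • z)‖ ^ 2 ≤ (L ^ 2 - 2 * μ * η + μ ^ 2) * ‖y - z‖ ^ 2 := by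
  have hexpand : ‖(V y - μ • y) - (V z - μ • z)‖ ^ 2
      = ‖V y - V z‖ ^ 2 - 2 * (μ * ⟪V y - V z, y - z⟫) + μ ^ 2 * ‖y - z‖ ^ 2 := by
    rw [show (V y - μ • y) - (V z - μ • z) = (V y - V z) - μ • (y - z) by module,
      norm_sub_sq_real, real_inner_smul_right, norm_smul, Real.norm_eq_abs, mul_pow, sq_abs]
  have hLsq : ‖V y - V z‖ ^ 2 ≤ L ^ 2 * ‖y - z‖ ^ 2 := by
    rw [← mul_pow]
    exact pow_le_pow_left₀ (norm_nonneg _) (hL y z) 2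
  rw [hexpand]
  nlinarith [mul_le_mul_of_nonneg_left (hη y z) hμ]

end InnerProductSpace

section MetricProj

variable {d : ℕ} {C : Set (EuclideanSpace ℝ (Fin d))}

theorem metricProj_mem_and_le (hne : C.Nonempty) (hcl : IsClosed C)
    (x : EuclideanSpace ℝ (Fin d)) :
    metricProj C x ∈ C ∧ ∀ z ∈ C, ‖x - metricProj C x‖ ≤ ‖x - z‖ := by
  have h : ∃ y, y ∈ C ∧ ∀ z ∈ C, ‖x - y‖ ≤ ‖x - z‖ := by
    obtain ⟨y, hy, hdy⟩ := hcl.exists_infDist_eq_dist hne x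
    refine ⟨y, hy, fun z hz => ?_⟩
    rw [← dist_eq_norm, ← hdy, ← dist_eq_norm]
    exact Metric.infDist_le_dist_of_mem hz
  rw [metricProj, dif_pos h]
  exact h.choose_spec

theorem inner_sub_metricProj_nonpos (hne : C.Nonempty) (hcl : IsClosed C) (hcv : Convex ℝ C)
    (x : EuclideanSpace ℝ (Fin d)) :
    ∀ z ∈ C, ⟪x - metricProj C x, z - metricProj C x⟫ ≤ 0 := by
  obtain ⟨hmem, hmin⟩ := metricProj_mem_and_le hne hcl x
  have : Nonempty C := hne.to_subtype
  have hinf : ‖x - metricProj C x‖ = ⨅ w : C, ‖x - w‖ :=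
    le_antisymm (le_ciInf fun w => hmin w w.2)
      (ciInf_le ⟨0, by rintro _ ⟨w, rfl⟩; exact norm_nonneg _⟩ (⟨_, hmem⟩ : C))
  exact (norm_eq_iInf_iff_real_inner_le_zero hcv hmem).1 hinf

end MetricProj

theorem stmt_8_general {d : ℕ} (ψ : EuclideanSpace ℝ (Fin d) → Set (EuclideanSpace ℝ (Fin d)))
    (V : EuclideanSpace ℝ (Fin d) → EuclideanSpace ℝ (Fin d)) (L η μ ρ : ℝ)
    (hΓ₁ : ∀ x, (ψ x).Nonempty ∧ IsClosed (ψ x) ∧ Convex ℝ (ψ x))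
    (hL : ∀ y z, ‖V y - V z‖ ≤ L * ‖y - z‖)
    (hη : ∀ y z, η * ‖y - z‖ ^ 2 ≤ ⟪V y - V z, y - z⟫)
    (hμ : 0 < μ)
    (hproj : ∀ y r s, ‖metricProj (ψ r) y - metricProj (ψ s) y‖ ≤ ρ * ‖r - s‖)
    (xs : EuclideanSpace ℝ (Fin d))
    (hxs : V xs ∈ ψ xs ∧ ∀ z ∈ ψ xs, 0 ≤ ⟪xs, z - V xs⟫) :
    ∀ w : EuclideanSpace ℝ (Fin d),
      (η - ρ - 1/2 - L^2/2 - μ^2/2 + μ*η) * ‖w - xs‖ ^ 2 ≤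
        ⟪V w - metricProj (ψ w) (V w - μ • w), w - xs⟫ := by
  intro w
  obtain ⟨hne, hcl, hcv⟩ := hΓ₁ xs
  set b := V w - μ • w
  set Q := metricProj (ψ xs) b
  have hsol : ⟪(V xs - μ • xs) - V xs, Q - V xs⟫ ≤ 0 := by
    rw [sub_sub_cancel_left, inner_neg_left, real_inner_smul_left]
    linarith [mul_nonneg hμ.le (hxs.2 Q (metricProj_mem_and_le hne hcl b).1)]
  have hQ : ‖V xs - Q‖ ^ 2 ≤ (L ^ 2 - 2 * μ * η + μ ^ 2) * ‖w - xs‖ ^ 2 := by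
    have h := norm_sub_le_of_inner_sub_nonpos hsol
      (inner_sub_metricProj_nonpos hne hcl hcv b _ hxs.1)
    have hab := norm_sub_smul_sub_sub_smul_sq_le hL hη hμ.le xs w
    rw [norm_sub_rev xs] at hab
    exact (pow_le_pow_left₀ (norm_nonneg _) h 2).trans hab
  have hsplit : ⟪V w - metricProj (ψ w) b, w - xs⟫
      = ⟪V w - V xs, w - xs⟫ + ⟪V xs - Q, w - xs⟫ + ⟪Q - metricProj (ψ w) b, w - xs⟫ := by
    rw [← inner_add_left, ← inner_add_left]
    congr 1
    abel
  have hset : -(ρ * ‖w - xs‖ ^ 2) ≤ ⟪Q - metricProj (ψ w) b, w - xs⟫ :=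
    neg_mul_norm_sq_le_inner ((hproj b xs w).trans_eq (by rw [norm_sub_rev]))
  rw [hsplit]
  linarith [hη w xs, neg_half_add_norm_sq_le_inner (V xs - Q) (w - xs)]

/-- If `x*` solves the IQVIP, then for all `w`,
`⟨V w − P_{ψ w}(V w − μ w), w − x*⟩ ≥ (η − ρ − 1/2 − L²/2 − μ²/2 + μη) ‖w − x*‖²`. -/
theorem stmt_8 {d : ℕ} (ψ : EuclideanSpace ℝ (Fin d) → Set (EuclideanSpace ℝ (Fin d)))
    (V : EuclideanSpace ℝ (Fin d) → EuclideanSpace ℝ (Fin d)) (L η μ ρ : ℝ)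
    (hΓ₁ : ∀ x, (ψ x).Nonempty ∧ IsClosed (ψ x) ∧ Convex ℝ (ψ x))
    (hL : ∀ y z, ‖V y - V z‖ ≤ L * ‖y - z‖)
    (hη : ∀ y z, η * ‖y - z‖ ^ 2 ≤ ⟪V y - V z, y - z⟫)
    (hμ : 0 < μ) (hρ : 0 < ρ)
    (hproj : ∀ y r s, ‖metricProj (ψ r) y - metricProj (ψ s) y‖ ≤ ρ * ‖r - s‖)
    (xs : EuclideanSpace ℝ (Fin d))
    (hxs : V xs ∈ ψ xs ∧ ∀ z ∈ ψ xs, 0 ≤ ⟪xs, z - V xs⟫) :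
    ∀ w : EuclideanSpace ℝ (Fin d),
      (η - ρ - 1/2 - L^2/2 - μ^2/2 + μ*η) * ‖w - xs‖ ^ 2 ≤
        ⟪V w - metricProj (ψ w) (V w - μ • w), w - xs⟫ :=
  stmt_8_general ψ V L η μ ρ hΓ₁ hL hη hμ hproj xs hxs
end

section
/- Let ψ : ℝⁿ ⇉ ℝⁿ satisfy the (Γ₁)-condition, V : ℝⁿ → ℝⁿ be a mapping, μ > 0 and σ, τ > 0 constants. Let x : ℕ → ℝⁿ be a sequence satisfying the iteration x_{n+1} = x_n + (1 − σ)(x_n − x_{n−1}) + τ(P_{ψ(x_n)}(V(x_n) − μ x_n) − V(x_n)) for n ≥ 1, and let x* ∈ ℝⁿ. Define v_n := ‖x_n − x*‖², a_n := ‖x_{n+1} − x_n‖², c_n := ‖x_n − x_{n−1}‖², v^Δ(n) := v_{n+1} − v_n, v^∇(n) := v_n − v_{n−1}, v^{Δ∇}(n) := v^Δ(n) − v^∇(n), and c^Δ(n) := c_{n+1} − c_n. Then for every n ≥ 1, v^{Δ∇}(n) + σ v^∇(n) = 2τ⟨P_{ψ(x_n)}(V(x_n) − μ x_n) − V(x_n),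 x_n − x*⟩ + 2a_n − σ c_n − c^Δ(n). -/
/- Expanding `‖x_{n+1} - x*‖²` and `‖x_{n-1} - x*‖²` around `x_n - x*` turns both differences of
`v` into inner products with `x_n - x*`; the inertial part `(1 - σ)(x_n - x_{n-1})` of the step
then cancels against `(1 - σ) v^∇(n)`, leaving only the projection term of the step. -/

open scoped RealInnerProductSpace

theorem sq_dist_second_diff_of_inertial_step {E : Type*} [NormedAddCommGroup E]
    [InnerProductSpace ℝ E] (σ τ : ℝ) (next cur prev p q : E)
    (hstep : next - cur = (1 - σ) • (cur - prev) + τ • q) :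
    ((‖next - p‖ ^ 2 - ‖cur - p‖ ^ 2) - (‖cur - p‖ ^ 2 - ‖prev - p‖ ^ 2))
        + σ * (‖cur - p‖ ^ 2 - ‖prev - p‖ ^ 2)
      = 2 * τ * ⟪q, cur - p⟫ + 2 * ‖next - cur‖ ^ 2 - σ * ‖cur - prev‖ ^ 2
        - (‖next - cur‖ ^ 2 - ‖cur - prev‖ ^ 2) := by
  have hnext : next - p = (cur - p) + (next - cur) := by abel
  have hprev : prev - p = (cur - p) - (cur - prev) := by abel
  have hinner : ⟪cur - p, next - cur⟫ = (1 - σ) * ⟪cur - p, cur - prev⟫ + τ * ⟪q, cur - p⟫ := by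
    rw [hstep, inner_add_right, real_inner_smul_right, real_inner_smul_right, real_inner_comm q]
  rw [hnext, hprev, norm_add_sq_real, norm_sub_sq_real (cur - p) (cur - prev), hinner]
  ring

theorem stmt_16_general {d : ℕ} (ψ : EuclideanSpace ℝ (Fin d) → Set (EuclideanSpace ℝ (Fin d)))
    (V : EuclideanSpace ℝ (Fin d) → EuclideanSpace ℝ (Fin d)) (μ σ τ : ℝ)
    (x : ℕ → EuclideanSpace ℝ (Fin d))
    (hiter : ∀ n : ℕ, 1 ≤ n →
      x (n+1) = x n + (1 - σ) • (x n - x (n-1)) +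
        τ • (metricProj (ψ (x n)) (V (x n) - μ • x n) - V (x n)))
    (xs : EuclideanSpace ℝ (Fin d)) :
    ∀ n : ℕ, 1 ≤ n →
      ((‖x (n+1) - xs‖ ^ 2 - ‖x n - xs‖ ^ 2) - (‖x n - xs‖ ^ 2 - ‖x (n-1) - xs‖ ^ 2))
          + σ * (‖x n - xs‖ ^ 2 - ‖x (n-1) - xs‖ ^ 2)
        = 2 * τ * ⟪metricProj (ψ (x n)) (V (x n) - μ • x n) - V (x n), x n - xs⟫
          + 2 * ‖x (n+1) - x n‖ ^ 2 - σ * ‖x n - x (n-1)‖ ^ 2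
          - (‖x (n+1) - x n‖ ^ 2 - ‖x n - x (n-1)‖ ^ 2) := by
  intro n hn
  apply sq_dist_second_diff_of_inertial_step
  rw [hiter n hn]
  abel

/-- For the iteration
`x_{n+1} = x_n + (1 − σ)(x_n − x_{n−1}) + τ (P_{ψ(x_n)}(V(x_n) − μ x_n) − V(x_n))`
and any `x*`, with `v_n = ‖x_n − x*‖²`, `a_n = ‖x_{n+1} − x_n‖²`, `c_n = ‖x_n − x_{n−1}‖²`,
one has `v^{Δ∇}(n) + σ v^∇(n)
  = 2τ ⟨P_{ψ(x_n)}(V(x_n) − μ x_n) − V(x_n), x_n − x*⟩ + 2a_n − σ c_n − c^Δ(n)`. -/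
theorem stmt_16 {d : ℕ} (ψ : EuclideanSpace ℝ (Fin d) → Set (EuclideanSpace ℝ (Fin d)))
    (V : EuclideanSpace ℝ (Fin d) → EuclideanSpace ℝ (Fin d)) (μ σ τ : ℝ)
    (hμ : 0 < μ) (hσ : 0 < σ) (hτ : 0 < τ)
    (hΓ₁ : ∀ x, (ψ x).Nonempty ∧ IsClosed (ψ x) ∧ Convex ℝ (ψ x))
    (x : ℕ → EuclideanSpace ℝ (Fin d))
    (hiter : ∀ n : ℕ, 1 ≤ n →
      x (n+1) = x n + (1 - σ) • (x n - x (n-1)) +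
        τ • (metricProj (ψ (x n)) (V (x n) - μ • x n) - V (x n)))
    (xs : EuclideanSpace ℝ (Fin d)) :
    ∀ n : ℕ, 1 ≤ n →
      ((‖x (n+1) - xs‖ ^ 2 - ‖x n - xs‖ ^ 2) - (‖x n - xs‖ ^ 2 - ‖x (n-1) - xs‖ ^ 2))
          + σ * (‖x n - xs‖ ^ 2 - ‖x (n-1) - xs‖ ^ 2)
        = 2 * τ * ⟪metricProj (ψ (x n)) (V (x n) - μ • x n) - V (x n), x n - xs⟫
          + 2 * ‖x (n+1) - x n‖ ^ 2 - σ * ‖x n - x (n-1)‖ ^ 2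
          - (‖x (n+1) - x n‖ ^ 2 - ‖x n - x (n-1)‖ ^ 2) :=
  stmt_16_general ψ V μ σ τ x hiter xs
end
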